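/- arXiv:2508.07378 — 5 statements merged into one kernel-verified Lean document; each statement's English description precedes it below -/
import Mathlib

section
/- Let S ⊆ ℝ be an open subset of (0, ∞) such that every connected component of S is a bounded open interval, and such that for every connected component (a, b) of S, if S ∩ (b, ∞) is nonempty then inf(S ∩ (b, ∞)) ≥ b + (3/2)·(b − a) (i.e., each visit interval of length ℓ is followed by a gap of length at least (3/2)·ℓ before the next component). Then liminf_{T→∞} (1/T)·λ(S ∩ [0, T]) ≤ 2/3, where λ denotes Lebesgue measure on ℝ. -/
/-!
Stretch every component `(a, b)` of `S` to `(a, b + (3/2)(b - a))`, i.e. append to it the gap that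
must follow it. The gap condition makes the stretched intervals pairwise disjoint. Taking
`T = b + (3/2)(b - a)` for a component `(a, b)`, the set `S ∩ [0, T]` is covered by the components
whose stretched intervals lie inside `(0, T)`, so `(5/2) λ(S ∩ [0, T]) ≤ T`. If `S` is unbounded
such `T` are arbitrarily large; if `S` is bounded, `λ(S ∩ [0, T]) / T → 0`.
-/

open Set Filter MeasureTheory

theorem disjoint_or_eq_connectedComponentIn {α : Type*} [TopologicalSpace α] (F : Set α)
    (x y : α) :
    Disjoint (connectedComponentIn F x) (connectedComponentIn F y) ∨
      connectedComponentIn F x = connectedComponentIn F y := by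
  rw [or_iff_not_imp_left, not_disjoint_iff]
  rintro ⟨z, hzx, hzy⟩
  rw [connectedComponentIn_eq hzx, connectedComponentIn_eq hzy]

theorem eq_of_Ioo_eq_Ioo {α : Type*} [ConditionallyCompleteLinearOrder α] [DenselyOrdered α]
    {a b c d : α} (hab : a < b) (h : Ioo a b = Ioo c d) : a = c ∧ b = d := by
  have hcd : c < d := nonempty_Ioo.1 (h ▸ nonempty_Ioo.2 hab)
  exact ⟨by rw [← csInf_Ioo hab, h, csInf_Ioo hcd], by rw [← csSup_Ioo hab, h, csSup_Ioo hcd]⟩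

theorem le_of_Ioo_subset_Ioi {a b d : ℝ} (hab : a < b) (h : Ioo a b ⊆ Ioi d) : d ≤ a := by
  have ha : a ∈ closure (Ioo a b) := by
    rw [closure_Ioo hab.ne]
    exact left_mem_Icc.2 hab.le
  simpa using closure_mono h ha

theorem mul_measure_biUnion_le {α ι : Type*} [MeasurableSpace α] (μ : Measure α) {s : Set ι}
    (hs : s.Countable) {C E : ι → Set α} (hE : s.PairwiseDisjoint E)
    (hEm : ∀ i ∈ s, MeasurableSet (E i)) {c : ENNReal} (hCE : ∀ i ∈ s, c * μ (C i) ≤ μ (E i)) :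
    c * μ (⋃ i ∈ s, C i) ≤ μ (⋃ i ∈ s, E i) :=
  calc c * μ (⋃ i ∈ s, C i) ≤ c * ∑' i : s, μ (C i) := by gcongr; exact measure_biUnion_le μ hs C
    _ = ∑' i : s, c * μ (C i) := ENNReal.tsum_mul_left.symm
    _ ≤ ∑' i : s, μ (E i) := ENNReal.tsum_le_tsum fun i => hCE i i.2
    _ = μ (⋃ i ∈ s, E i) := (measure_biUnion hs hE hEm).symm

/-- The right end of the interval `(p.1, p.2)` followed by a gap `c` times its length. -/
def reach (c : ℝ) (p : ℝ × ℝ) : ℝ := p.2 + c * (p.2 - p.1)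

theorem snd_le_reach {c : ℝ} (hc : 0 ≤ c) {p : ℝ × ℝ} (hp : p.1 ≤ p.2) : p.2 ≤ reach c p :=
  le_add_of_nonneg_right (mul_nonneg hc (sub_nonneg.2 hp))

theorem volume_Ioo_reach (c : ℝ) {p : ℝ × ℝ} (hp : p.1 ≤ p.2) :
    volume (Ioo p.1 (reach c p)) = ENNReal.ofReal (1 + c) * volume (Ioo p.1 p.2) := by
  rw [Real.volume_Ioo, Real.volume_Ioo, ← ENNReal.ofReal_mul' (sub_nonneg.2 hp), reach]
  ring_nf

structure IsGappedIntervalFamily (c : ℝ) (P : Set (ℝ × ℝ)) : Prop where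
  fst_lt_snd : ∀ p ∈ P, p.1 < p.2
  pairwiseDisjoint : P.PairwiseDisjoint fun p => Ioo p.1 p.2
  reach_le_fst : ∀ p ∈ P, ∀ q ∈ P, p.2 ≤ q.1 → reach c p ≤ q.1

namespace IsGappedIntervalFamily

variable {c : ℝ} {P : Set (ℝ × ℝ)} (hP : IsGappedIntervalFamily c P)
include hP

theorem countable : P.Countable :=
  hP.pairwiseDisjoint.countable_of_isOpen (fun _ _ => isOpen_Ioo)
    fun p hp => nonempty_Ioo.2 (hP.fst_lt_snd p hp)

theorem snd_le_or_snd_le {p q : ℝ × ℝ} (hp : p ∈ P) (hq : q ∈ P) (hpq : p ≠ q) :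
    p.2 ≤ q.1 ∨ q.2 ≤ p.1 := by
  have h := hP.pairwiseDisjoint hp hq hpq
  simp only [Function.onFun, Ioo_disjoint_Ioo, min_le_iff, le_max_iff] at h
  have := hP.fst_lt_snd p hp
  have := hP.fst_lt_snd q hq
  rcases h with (h | h) | (h | h)
  · linarith
  · exact .inr h
  · exact .inl h
  · linarith

theorem pairwiseDisjoint_reach : P.PairwiseDisjoint fun p => Ioo p.1 (reach c p) := by
  have key : ∀ p ∈ P, ∀ q ∈ P, p.2 ≤ q.1 →
      Disjoint (Ioo p.1 (reach c p)) (Ioo q.1 (reach c q)) := fun p hp q hq hpq =>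
    Ioo_disjoint_Ioo.2 <| (min_le_left _ _).trans <| (hP.reach_le_fst p hp q hq hpq).trans
      (le_max_right _ _)
  intro p hp q hq hpq
  rcases hP.snd_le_or_snd_le hp hq hpq with h | h
  · exact key p hp q hq h
  · exact (key q hq p hp h).symm

theorem reach_le_reach_of_mem_Ioo (hc : 0 ≤ c) {p q : ℝ × ℝ} (hp : p ∈ P) (hq : q ∈ P) {z : ℝ}
    (hz : z ∈ Ioo q.1 q.2) (hzp : z ≤ reach c p) : reach c q ≤ reach c p := by
  obtain rfl | hpq := eq_or_ne p q
  · exact le_rfl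
  have hp_lt := hP.fst_lt_snd p hp
  rcases hP.snd_le_or_snd_le hp hq hpq with h | h
  · linarith [hP.reach_le_fst p hp q hq h, hz.1]
  · linarith [hP.reach_le_fst q hq p hp h, snd_le_reach hc hp_lt.le]

theorem mul_volume_inter_Icc_reach_le (hc : 0 ≤ c) (hpos : ∀ q ∈ P, 0 ≤ q.1) {p : ℝ × ℝ}
    (hp : p ∈ P) :
    (1 + c) * (volume ((⋃ q ∈ P, Ioo q.1 q.2) ∩ Icc 0 (reach c p))).toReal ≤ reach c p := by
  set Q := {q ∈ P | reach c q ≤ reach c p}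
  have hcover : (⋃ q ∈ P, Ioo q.1 q.2) ∩ Icc 0 (reach c p) ⊆ ⋃ q ∈ Q, Ioo q.1 q.2 := by
    simp only [subset_def, mem_inter_iff, mem_iUnion₂]
    rintro z ⟨⟨q, hq, hz⟩, -, hzp⟩
    exact ⟨q, ⟨hq, hP.reach_le_reach_of_mem_Ioo hc hp hq hz hzp⟩, hz⟩
  have hbound : ENNReal.ofReal (1 + c) * volume ((⋃ q ∈ P, Ioo q.1 q.2) ∩ Icc 0 (reach c p))
      ≤ ENNReal.ofReal (reach c p) :=
    calc _ ≤ ENNReal.ofReal (1 + c) * volume (⋃ q ∈ Q, Ioo q.1 q.2) := by gcongr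
      _ ≤ volume (⋃ q ∈ Q, Ioo q.1 (reach c q)) :=
          mul_measure_biUnion_le volume (hP.countable.mono (sep_subset _ _))
            (hP.pairwiseDisjoint_reach.subset (sep_subset _ _)) (fun _ _ => measurableSet_Ioo)
            fun q hq => (volume_Ioo_reach c (hP.fst_lt_snd q hq.1).le).ge
      _ ≤ volume (Ioo 0 (reach c p)) :=
          measure_mono <| iUnion₂_subset fun q hq => Ioo_subset_Ioo (hpos q hq.1) hq.2
      _ = ENNReal.ofReal (reach c p) := by rw [Real.volume_Ioo, sub_zero]
  have hreach : 0 ≤ reach c p :=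
    (hpos p hp).trans <| (hP.fst_lt_snd p hp).le.trans (snd_le_reach hc (hP.fst_lt_snd p hp).le)
  have := ENNReal.toReal_mono ENNReal.ofReal_ne_top hbound
  rwa [ENNReal.toReal_mul, ENNReal.toReal_ofReal (by linarith),
    ENNReal.toReal_ofReal hreach] at this

end IsGappedIntervalFamily

theorem exists_isGappedIntervalFamily_of_connectedComponentIn {S : Set ℝ} {c : ℝ}
    (hcomp : ∀ x ∈ S, ∃ a b : ℝ, a < b ∧ connectedComponentIn S x = Ioo a b ∧
      ((S ∩ Ioi b).Nonempty → b + c * (b - a) ≤ sInf (S ∩ Ioi b))) :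
    ∃ P, IsGappedIntervalFamily c P ∧ ⋃ p ∈ P, Ioo p.1 p.2 = S := by
  choose! A B hAB hcompAB hgap using hcomp
  have hmem : ∀ x ∈ S, x ∈ Ioo (A x) (B x) := fun x hx =>
    hcompAB x hx ▸ mem_connectedComponentIn hx
  have hsubset : ∀ x ∈ S, Ioo (A x) (B x) ⊆ S := fun x hx =>
    hcompAB x hx ▸ connectedComponentIn_subset S x
  refine ⟨(fun x => (A x, B x)) '' S, ⟨?_, ?_, ?_⟩, ?_⟩
  · rintro _ ⟨x, hx, rfl⟩
    exact hAB x hx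
  · rintro _ ⟨x, hx, rfl⟩ _ ⟨y, hy, rfl⟩ hxy
    rcases disjoint_or_eq_connectedComponentIn S x y with h | h <;>
      rw [hcompAB x hx, hcompAB y hy] at h
    · exact h
    · obtain ⟨hA, hB⟩ := eq_of_Ioo_eq_Ioo (hAB x hx) h
      exact absurd (Prod.ext hA hB) hxy
  · rintro _ ⟨x, hx, rfl⟩ _ ⟨y, hy, rfl⟩ (hxy : B x ≤ A y)
    have hIoo : Ioo (A y) (B y) ⊆ S ∩ Ioi (B x) := fun z hz => ⟨hsubset y hy hz, hxy.trans_lt hz.1⟩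
    have hinf : sInf (S ∩ Ioi (B x)) ≤ A y := by
      rw [← csInf_Ioo (hAB y hy)]
      exact csInf_le_csInf ⟨B x, fun _ h => h.2.le⟩ (nonempty_Ioo.2 (hAB y hy)) hIoo
    exact (hgap x hx ⟨y, hIoo (hmem y hy)⟩).trans hinf
  · ext z
    simp only [mem_iUnion₂, mem_image]
    constructor
    · rintro ⟨_, ⟨x, hx, rfl⟩, hz⟩
      exact hsubset x hx hz
    · exact fun hz => ⟨_, ⟨z, hz, rfl⟩, hmem z hz⟩

theorem eventually_volume_inter_Icc_div_le_of_bddAbove {S : Set ℝ} (hS : BddAbove S) {r : ℝ}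
    (hr : 0 < r) : ∀ᶠ T in atTop, (volume (S ∩ Icc 0 T)).toReal / T ≤ r := by
  obtain ⟨N, hN⟩ := hS
  set K := (volume (Icc 0 N)).toReal
  filter_upwards [eventually_ge_atTop (K / r), eventually_gt_atTop 0] with T hKT hT
  have hvol : (volume (S ∩ Icc 0 T)).toReal ≤ K :=
    ENNReal.toReal_mono measure_Icc_lt_top.ne <|
      measure_mono fun y hy => ⟨hy.2.1, hN hy.1⟩
  rw [div_le_iff₀ hT]
  rw [div_le_iff₀ hr] at hKT
  linarith

theorem ergodic_nongeneric_stmt0_general (S : Set ℝ) (hsub : S ⊆ Ioi 0)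
    (hcomp : ∀ x ∈ S, ∃ a b : ℝ, a < b ∧ connectedComponentIn S x = Ioo a b ∧
      ((S ∩ Ioi b).Nonempty → b + (3 / 2) * (b - a) ≤ sInf (S ∩ Ioi b))) :
    Filter.liminf (fun T : ℝ => (volume (S ∩ Icc 0 T)).toReal / T) Filter.atTop ≤ 2 / 3 := by
  obtain ⟨P, hP, hPS⟩ := exists_isGappedIntervalFamily_of_connectedComponentIn hcomp
  have hpos : ∀ p ∈ P, 0 ≤ p.1 := fun p hp =>
    le_of_Ioo_subset_Ioi (hP.fst_lt_snd p hp) <| (subset_biUnion_of_mem hp).trans (hPS ▸ hsub)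
  refine liminf_le_of_frequently_le ?_ <| isBoundedUnder_of_eventually_ge <|
    (eventually_ge_atTop 0).mono fun T hT => div_nonneg ENNReal.toReal_nonneg hT
  by_cases hS : BddAbove S
  · exact (eventually_volume_inter_Icc_div_le_of_bddAbove hS (by norm_num)).frequently
  rw [frequently_atTop]
  intro M
  obtain ⟨x, hxS, hMx⟩ := not_bddAbove_iff.1 hS M
  obtain ⟨p, hp, hxp⟩ := mem_iUnion₂.1 (hPS ▸ hxS)
  have hvol := hP.mul_volume_inter_Icc_reach_le (by norm_num) hpos hp
  rw [hPS] at hvol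
  have hx_reach : x < reach (3 / 2) p :=
    hxp.2.trans_le (snd_le_reach (by norm_num) (hP.fst_lt_snd p hp).le)
  refine ⟨reach (3 / 2) p, hMx.le.trans hx_reach.le, ?_⟩
  have hreach_pos : 0 < reach (3 / 2) p := (mem_Ioi.1 (hsub hxS)).trans hx_reach
  rw [div_le_iff₀ hreach_pos]
  linarith

/-- If `S ⊆ (0, ∞)` is open, every connected component of `S` is a bounded
open interval, and each component `(a, b)` is followed (if `S` meets `(b, ∞)` at all) by a
gap of length at least `(3/2) * (b - a)`, then
`liminf_{T → ∞} (1/T) * λ(S ∩ [0, T]) ≤ 2/3`. -/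
theorem ergodic_nongeneric_stmt0 (S : Set ℝ) (hopen : IsOpen S) (hsub : S ⊆ Ioi 0)
    (hcomp : ∀ x ∈ S, ∃ a b : ℝ, a < b ∧ connectedComponentIn S x = Ioo a b ∧
      ((S ∩ Ioi b).Nonempty → b + (3 / 2) * (b - a) ≤ sInf (S ∩ Ioi b))) :
    Filter.liminf (fun T : ℝ => (volume (S ∩ Icc 0 T)).toReal / T) Filter.atTop ≤ 2 / 3 :=
  ergodic_nongeneric_stmt0_general S hsub hcomp
end

section
/- Let S ⊆ ℝ be a measurable set, and let (a_n)_{n≥1}, (b_n)_{n≥1}, (c_n)_{n≥0} be real sequences with c_0 = 0 such that for every n ≥ 1: c_{n−1} ≤ a_n < b_n ≤ c_n, the intersection S ∩ [c_{n−1}, c_n] equals the open interval (a_n, b_n), and c_n − b_n ≥ (3/2)·(b_n − a_n). Then for every n ≥ 1, λ(S ∩ [0, c_n]) ≤ (2/3)·c_n, where λ denotes Lebesgue measure on ℝ. -/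
open Set MeasureTheory

/-! Each window `[c n, c (n+1)]` adds the visit length `b - a` to the occupation measure but
advances time by at least `(5/2) (b - a)`, because the window starts before `a` and the
excursion after `b` is at least `(3/2) (b - a)`; so the occupation measure stays below
`(2/3)` of the elapsed time, by induction starting from the empty window `[0, c 0]`. -/

theorem measure_inter_Icc_le_add {α : Type*} [MeasurableSpace α] [LinearOrder α]
    (μ : Measure α) (S : Set α) (x y z : α) :
    μ (S ∩ Icc x z) ≤ μ (S ∩ Icc x y) + μ (S ∩ Icc y z) := by
  refine (measure_mono ?_).trans (measure_union_le _ _)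
  rw [← inter_union_distrib_left]
  exact inter_subset_inter_right S Icc_subset_Icc_union_Icc

section Windows

variable {S : Set ℝ} {a b c : ℕ → ℝ}
  (hwindow : ∀ n, c n ≤ a (n + 1)) (hab : ∀ n, a (n + 1) ≤ b (n + 1))
  (hgap : ∀ n, (3 / 2) * (b (n + 1) - a (n + 1)) ≤ c (n + 1) - b (n + 1))
include hwindow hab hgap

theorem monotone_of_windows : Monotone c :=
  monotone_nat_of_le_succ fun n => by linarith [hwindow n, hab n, hgap n]

theorem volume_inter_Icc_zero_le_of_windows (hc0 : c 0 = 0)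
    (hvisit : ∀ n, S ∩ Icc (c n) (c (n + 1)) = Ioo (a (n + 1)) (b (n + 1))) (n : ℕ) :
    volume (S ∩ Icc 0 (c n)) ≤ ENNReal.ofReal ((2 / 3) * c n) := by
  have hc_nonneg : ∀ n, 0 ≤ c n := fun n =>
    hc0 ▸ monotone_of_windows hwindow hab hgap (Nat.zero_le n)
  induction n with
  | zero => simpa [hc0] using measure_mono_null inter_subset_right (measure_singleton (0 : ℝ))
  | succ n ih =>
    calc volume (S ∩ Icc 0 (c (n + 1)))
        ≤ volume (S ∩ Icc 0 (c n)) + volume (S ∩ Icc (c n) (c (n + 1))) :=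
          measure_inter_Icc_le_add _ _ _ _ _
      _ ≤ ENNReal.ofReal ((2 / 3) * c n) + ENNReal.ofReal (b (n + 1) - a (n + 1)) := by
          rw [hvisit, Real.volume_Ioo]
          exact add_le_add_left ih _
      _ = ENNReal.ofReal ((2 / 3) * c n + (b (n + 1) - a (n + 1))) :=
          (ENNReal.ofReal_add (by linarith [hc_nonneg n]) (by linarith [hab n])).symm
      _ ≤ ENNReal.ofReal ((2 / 3) * c (n + 1)) :=
          ENNReal.ofReal_le_ofReal (by linarith [hwindow n, hab n, hgap n])

end Windows

theorem ergodic_nongeneric_stmt1_general (S : Set ℝ)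
    (a b c : ℕ → ℝ) (hc0 : c 0 = 0)
    (horder : ∀ n : ℕ, 1 ≤ n → c (n - 1) ≤ a n ∧ a n < b n ∧ b n ≤ c n)
    (hvisit : ∀ n : ℕ, 1 ≤ n → S ∩ Icc (c (n - 1)) (c n) = Ioo (a n) (b n))
    (hgap : ∀ n : ℕ, 1 ≤ n → (3 / 2) * (b n - a n) ≤ c n - b n) :
    ∀ n : ℕ, 1 ≤ n → (volume (S ∩ Icc 0 (c n))).toReal ≤ (2 / 3) * c n := by
  have hwindow (n : ℕ) : c n ≤ a (n + 1) := (horder (n + 1) n.succ_pos).1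
  have hab (n : ℕ) : a (n + 1) ≤ b (n + 1) := (horder (n + 1) n.succ_pos).2.1.le
  have hgap' (n : ℕ) := hgap (n + 1) n.succ_pos
  have hvisit' (n : ℕ) : S ∩ Icc (c n) (c (n + 1)) = Ioo (a (n + 1)) (b (n + 1)) :=
    hvisit (n + 1) n.succ_pos
  intro n _
  have hc_nonneg : 0 ≤ c n := hc0 ▸ monotone_of_windows hwindow hab hgap' (Nat.zero_le n)
  exact ENNReal.toReal_le_of_le_ofReal (by positivity)
    (volume_inter_Icc_zero_le_of_windows hwindow hab hgap' hc0 hvisit' n)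

/-- The finite-stage cumulative bound from Lemma 2: if for each `n ≥ 1` the
set `S` meets the window `[c (n-1), c n]` exactly in the open interval `(a n, b n)`, with
`c (n-1) ≤ a n < b n ≤ c n` and the excursion `c n - b n` at least `(3/2)` times the visit
length `b n - a n`, then `λ(S ∩ [0, c n]) ≤ (2/3) * c n` for all `n ≥ 1`. -/
theorem ergodic_nongeneric_stmt1 (S : Set ℝ) (hS : MeasurableSet S)
    (a b c : ℕ → ℝ) (hc0 : c 0 = 0)
    (horder : ∀ n : ℕ, 1 ≤ n → c (n - 1) ≤ a n ∧ a n < b n ∧ b n ≤ c n)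
    (hvisit : ∀ n : ℕ, 1 ≤ n → S ∩ Icc (c (n - 1)) (c n) = Ioo (a n) (b n))
    (hgap : ∀ n : ℕ, 1 ≤ n → (3 / 2) * (b n - a n) ≤ c n - b n) :
    ∀ n : ℕ, 1 ≤ n → (volume (S ∩ Icc 0 (c n))).toReal ≤ (2 / 3) * c n :=
  ergodic_nongeneric_stmt1_general S a b c hc0 horder hvisit hgap
end

section
/- Let X be a topological space, let φ : ℝ → X → X be a continuous flow on X (i.e., φ is jointly continuous, φ_0 = id, and φ_{s+t} = φ_s ∘ φ_t for all s, t ∈ ℝ), let U ⊆ X be open, and let v ∈ X with v ∉ U such that φ_{t_0}(v) ∈ U for some t_0 > 0. Suppose that every connected component (t_{−1}, t_1) of the open set {t > 0 : φ_t(v) ∈ U} ⊆ ℝ is bounded, and that whenever the set {t > t_1 : φ_t(v) ∈ U} is nonempty, its infimum t_2 satisfies t_2 − t_1 ≥ (3/2)·(t_1 − t_{−1}). Then liminf_{T→∞} (1/T)·λ({t ∈ [0, T] : φ_t(v) ∈ U}) ≤ 2/3, where λ denotes Lebesgue measure on ℝ. -/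
/-! Write `S = {t > 0 | φ t v ∈ U}`. If `S` is bounded, its density on `[0, T]` tends to `0`.
Otherwise take a component `(a₀, b₀)` of `S` beyond a given time and stop at the first return
`x = inf (S ∩ (b₀, ∞))`, which is not in `S`. Every component `(a, b)` of `S` left of `x` is then
followed by a gap `[b, b + (3/2)(b - a))` that still lies left of `x`, and these extended
intervals are pairwise disjoint. Hence `(5/2) λ(S ∩ [0, x]) ≤ x`: along a sequence of times
tending to infinity the density of `S` is at most `2/5`. -/

open Set Filter MeasureTheory

theorem IsOpen.csInf_inter_Ioi_notMem {S : Set ℝ} (hS : IsOpen S) {b : ℝ} (hb : b ∉ S)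
    (hne : (S ∩ Ioi b).Nonempty) : sInf (S ∩ Ioi b) ∉ S := by
  intro hx
  have hbx : b < sInf (S ∩ Ioi b) :=
    (le_csInf hne fun _ hs => hs.2.le).lt_of_ne fun h => hb (h ▸ hx)
  obtain ⟨l, u, hlu, hluS⟩ := mem_nhds_iff_exists_Ioo_subset.1 (hS.mem_nhds hx)
  obtain ⟨y, hy, hyx⟩ := exists_between (max_lt hlu.1 hbx)
  have hyS : y ∈ S ∩ Ioi b :=
    ⟨hluS ⟨(le_max_left _ _).trans_lt hy, hyx.trans hlu.2⟩, (le_max_right _ _).trans_lt hy⟩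
  exact (csInf_le ⟨b, fun _ hs => hs.2.le⟩ hyS).not_gt hyx

theorem right_notMem_of_connectedComponentIn_eq_Ioo {S : Set ℝ} {t a b : ℝ} (ht : t ∈ S)
    (h : connectedComponentIn S t = Ioo a b) : b ∉ S := by
  intro hb
  have htab : t ∈ Ioo a b := h ▸ mem_connectedComponentIn ht
  have hsub : Ioc a b ⊆ S := by
    rw [← Ioo_insert_right (htab.1.trans htab.2)]
    exact insert_subset hb (h ▸ connectedComponentIn_subset S t)
  have := isPreconnected_Ioc.subset_connectedComponentIn (Ioo_subset_Ioc_self htab) hsub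
  exact (h ▸ this ⟨htab.1.trans htab.2, le_rfl⟩ : b ∈ Ioo a b).2.false

theorem volume_biUnion_Ioo_le_of_pairwiseDisjoint_expansions {ι : Type*} {I : Set ι}
    {a b : ι → ℝ} {r x : ℝ} (hr : 0 ≤ r) (hab : ∀ i ∈ I, a i < b i)
    (hK : I.PairwiseDisjoint fun i => Ioo (a i) (b i + r * (b i - a i)))
    (hKx : ∀ i ∈ I, Ioo (a i) (b i + r * (b i - a i)) ⊆ Ioo 0 x) :
    ENNReal.ofReal (1 + r) * volume (⋃ i ∈ I, Ioo (a i) (b i)) ≤ ENNReal.ofReal x := by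
  have hI : I.Countable := hK.countable_of_isOpen (fun _ _ => isOpen_Ioo) fun i hi =>
    nonempty_Ioo.2 (by nlinarith [hab i hi])
  have hdisj : I.PairwiseDisjoint fun i => Ioo (a i) (b i) :=
    hK.mono_on fun i hi => Ioo_subset_Ioo_right (by nlinarith [hab i hi])
  have hvol : ∀ i ∈ I, volume (Ioo (a i) (b i + r * (b i - a i)))
      = ENNReal.ofReal (1 + r) * volume (Ioo (a i) (b i)) := fun i _ => by
    rw [Real.volume_Ioo, Real.volume_Ioo, ← ENNReal.ofReal_mul (by linarith)]
    ring_nf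
  calc ENNReal.ofReal (1 + r) * volume (⋃ i ∈ I, Ioo (a i) (b i))
      = volume (⋃ i ∈ I, Ioo (a i) (b i + r * (b i - a i))) := by
        rw [measure_biUnion hI hdisj fun _ _ => measurableSet_Ioo,
          measure_biUnion hI hK fun _ _ => measurableSet_Ioo, ← ENNReal.tsum_mul_left]
        exact tsum_congr fun i => (hvol i i.2).symm
    _ ≤ volume (Ioo 0 x) := measure_mono (iUnion₂_subset hKx)
    _ = ENNReal.ofReal x := by rw [Real.volume_Ioo, sub_zero]

theorem pairwiseDisjoint_image_connectedComponentIn {α : Type*} [TopologicalSpace α]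
    (F A : Set α) : (connectedComponentIn F '' A).PairwiseDisjoint id := by
  rintro _ ⟨x, -, rfl⟩ _ ⟨y, -, rfl⟩ hne
  exact disjoint_left.2 fun p hpx hpy =>
    hne ((connectedComponentIn_eq hpx).trans (connectedComponentIn_eq hpy).symm)

theorem disjoint_Ioo_iff_le_or_le {a b a' b' : ℝ} (hab : a < b) (hab' : a' < b') :
    Disjoint (Ioo a b) (Ioo a' b') ↔ b ≤ a' ∨ b' ≤ a := by
  rw [Ioo_disjoint_Ioo]
  grind

theorem volume_inter_Icc_le_of_gaps_le {S : Set ℝ} {r x : ℝ} (hpos : S ⊆ Ioi 0) (hr : 0 ≤ r)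
    (hxS : x ∉ S)
    (hx : ∀ t ∈ S, t < x → ∃ a b, connectedComponentIn S t = Ioo a b ∧ b + r * (b - a) ≤ x ∧
      ∀ s ∈ S, b < s → b + r * (b - a) ≤ s) :
    ENNReal.ofReal (1 + r) * volume (S ∩ Icc 0 x) ≤ ENNReal.ofReal x := by
  set C := connectedComponentIn S '' (S ∩ Iio x)
  have hCS : ∀ c ∈ C, c ⊆ S := by
    rintro _ ⟨t, -, rfl⟩
    exact connectedComponentIn_subset S t
  have hC : ∀ c ∈ C, ∃ a b, c = Ioo a b ∧ a < b ∧ 0 ≤ a ∧ b + r * (b - a) ≤ x ∧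
      ∀ s ∈ S, b < s → b + r * (b - a) ≤ s := by
    rintro _ ⟨t, ⟨ht, htx⟩, rfl⟩
    obtain ⟨a, b, hab, hbx, hgap⟩ := hx t ht htx
    have htab : t ∈ Ioo a b := hab ▸ mem_connectedComponentIn ht
    have habS : Ioo a b ⊆ S := hab ▸ connectedComponentIn_subset S t
    have ha : 0 ≤ a := not_lt.1 fun ha =>
      lt_irrefl (0 : ℝ) (hpos (habS ⟨ha, (hpos ht).trans htab.2⟩))
    exact ⟨a, b, hab, htab.1.trans htab.2, ha, hbx, hgap⟩
  choose! a b hCab hab ha hbx hgap using hC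
  have hfollow : ∀ c ∈ C, ∀ c' ∈ C, b c ≤ a c' → b c + r * (b c - a c) ≤ a c' := by
    intro c hc c' hc' h
    rw [← csInf_Ioo (hab c' hc')]
    refine le_csInf (nonempty_Ioo.2 (hab c' hc')) fun s hs => hgap c hc s ?_ (h.trans_lt hs.1)
    exact hCS c' hc' (hCab c' hc' ▸ hs)
  have hK : C.PairwiseDisjoint fun c => Ioo (a c) (b c + r * (b c - a c)) := by
    intro c hc c' hc' hne
    have hcc' : Disjoint c c' := pairwiseDisjoint_image_connectedComponentIn S _ hc hc' hne
    rw [hCab c hc, hCab c' hc', disjoint_Ioo_iff_le_or_le (hab c hc) (hab c' hc')] at hcc'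
    rcases hcc' with h | h
    · exact Ioo_disjoint_Ioo.2
        ((min_le_left _ _).trans ((hfollow c hc c' hc' h).trans (le_max_right _ _)))
    · exact Ioo_disjoint_Ioo.2
        ((min_le_right _ _).trans ((hfollow c' hc' c hc h).trans (le_max_left _ _)))
  have hcover : S ∩ Icc 0 x ⊆ ⋃ c ∈ C, Ioo (a c) (b c) := by
    rintro s ⟨hs, -, hsx⟩
    have hsC : connectedComponentIn S s ∈ C :=
      mem_image_of_mem _ ⟨hs, hsx.lt_of_ne fun h => hxS (h ▸ hs)⟩
    exact mem_biUnion hsC (hCab _ hsC ▸ mem_connectedComponentIn hs)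
  calc ENNReal.ofReal (1 + r) * volume (S ∩ Icc 0 x)
      ≤ ENNReal.ofReal (1 + r) * volume (⋃ c ∈ C, Ioo (a c) (b c)) := by gcongr
    _ ≤ ENNReal.ofReal x := volume_biUnion_Ioo_le_of_pairwiseDisjoint_expansions hr hab hK
        fun c hc => Ioo_subset_Ioo (ha c hc) (hbx c hc)

def HasProportionalGaps (S : Set ℝ) (r : ℝ) : Prop :=
  ∀ t ∈ S, ∃ a b, connectedComponentIn S t = Ioo a b ∧ ∀ s ∈ S, b < s → b + r * (b - a) ≤ s

namespace HasProportionalGaps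

variable {S : Set ℝ} {r : ℝ}

theorem exists_gt_of_not_bddAbove (hS : IsOpen S) (hgap : HasProportionalGaps S r)
    (hunb : ¬BddAbove S) (R : ℝ) :
    ∃ x, R < x ∧ x ∉ S ∧ ∀ t ∈ S, t < x → ∃ a b, connectedComponentIn S t = Ioo a b ∧
      b + r * (b - a) ≤ x ∧ ∀ s ∈ S, b < s → b + r * (b - a) ≤ s := by
  obtain ⟨t₀, ht₀, hRt₀⟩ := not_bddAbove_iff.1 hunb R
  obtain ⟨a₀, b₀, hab₀, -⟩ := hgap t₀ ht₀
  obtain ⟨s₀, hs₀, hbs₀⟩ := not_bddAbove_iff.1 hunb b₀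
  have hne : (S ∩ Ioi b₀).Nonempty := ⟨s₀, hs₀, hbs₀⟩
  have hbdd : BddBelow (S ∩ Ioi b₀) := ⟨b₀, fun _ hs => hs.2.le⟩
  set x := sInf (S ∩ Ioi b₀)
  have hxS : x ∉ S :=
    hS.csInf_inter_Ioi_notMem (right_notMem_of_connectedComponentIn_eq_Ioo ht₀ hab₀) hne
  have hRx : R < x := calc
    R < t₀ := hRt₀
    _ < b₀ := (hab₀ ▸ mem_connectedComponentIn ht₀ : t₀ ∈ Ioo a₀ b₀).2
    _ ≤ x := le_csInf hne fun _ hs => hs.2.le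
  refine ⟨x, hRx, hxS, fun t ht htx => ?_⟩
  obtain ⟨a, b, hab, hgap_t⟩ := hgap t ht
  have htab : t ∈ Ioo a b := hab ▸ mem_connectedComponentIn ht
  have habS : Ioo a b ⊆ S := hab ▸ connectedComponentIn_subset S t
  have hbx : b ≤ x := not_lt.1 fun hxb => hxS (habS ⟨htab.1.trans htx, hxb⟩)
  have hbS := right_notMem_of_connectedComponentIn_eq_Ioo ht hab
  refine ⟨a, b, hab, le_csInf hne fun s hs => hgap_t s hs.1 ?_, hgap_t⟩
  exact (hbx.trans (csInf_le hbdd hs)).lt_of_ne fun h => hbS (h ▸ hs.1)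

theorem frequently_volume_inter_Icc_le (hS : IsOpen S) (hpos : S ⊆ Ioi 0)
    (hgap : HasProportionalGaps S r) (hr : 0 ≤ r) :
    ∃ᶠ T in atTop, ENNReal.ofReal (1 + r) * volume (S ∩ Icc 0 T) ≤ ENNReal.ofReal T := by
  by_cases hbdd : BddAbove S
  · obtain ⟨M, hM⟩ := hbdd
    refine Eventually.frequently ?_
    filter_upwards [eventually_ge_atTop ((1 + r) * M)] with T hT
    calc ENNReal.ofReal (1 + r) * volume (S ∩ Icc 0 T)
        ≤ ENNReal.ofReal (1 + r) * volume (Icc 0 M) := by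
          gcongr
          exact fun s hs => ⟨hs.2.1, hM hs.1⟩
      _ = ENNReal.ofReal ((1 + r) * M) := by
          rw [Real.volume_Icc, sub_zero, ← ENNReal.ofReal_mul (by linarith)]
      _ ≤ ENNReal.ofReal T := ENNReal.ofReal_le_ofReal hT
  · refine frequently_atTop.2 fun R => ?_
    obtain ⟨x, hRx, hxS, hx⟩ := hgap.exists_gt_of_not_bddAbove hS hbdd R
    exact ⟨x, hRx.le, volume_inter_Icc_le_of_gaps_le hpos hr hxS hx⟩

theorem liminf_volume_inter_Icc_div_le (hS : IsOpen S) (hpos : S ⊆ Ioi 0)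
    (hgap : HasProportionalGaps S r) (hr : 0 ≤ r) :
    liminf (fun T => (volume (S ∩ Icc 0 T)).toReal / T) atTop ≤ 1 / (1 + r) := by
  refine liminf_le_of_frequently_le ?_ (isBoundedUnder_of_eventually_ge (a := 0) ?_)
  · refine ((hgap.frequently_volume_inter_Icc_le hS hpos hr).and_eventually
      (eventually_gt_atTop 0)).mono fun T ⟨hT, hT0⟩ => ?_
    have := ENNReal.toReal_mono ENNReal.ofReal_ne_top hT
    rw [ENNReal.toReal_mul, ENNReal.toReal_ofReal (by linarith),
      ENNReal.toReal_ofReal hT0.le] at this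
    rw [div_le_div_iff₀ hT0 (by linarith)]
    linarith
  · filter_upwards [eventually_ge_atTop 0] with T hT
    positivity

end HasProportionalGaps

theorem ergodic_nongeneric_stmt2_general {X : Type*} [TopologicalSpace X]
    (φ : Flow ℝ X) (U : Set X) (hU : IsOpen U) (v : X) (hv : v ∉ U)
    (hcomp : ∀ t ∈ {s : ℝ | 0 < s ∧ φ s v ∈ U}, ∃ a b : ℝ,
      connectedComponentIn {s : ℝ | 0 < s ∧ φ s v ∈ U} t = Ioo a b ∧
      (({s : ℝ | b < s ∧ φ s v ∈ U}).Nonempty →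
        (3 / 2) * (b - a) ≤ sInf {s : ℝ | b < s ∧ φ s v ∈ U} - b)) :
    liminf (fun T : ℝ => (volume {t ∈ Icc (0 : ℝ) T | φ t v ∈ U}).toReal / T) atTop
      ≤ 2 / 3 := by
  set S := {s : ℝ | 0 < s ∧ φ s v ∈ U}
  have hS : IsOpen S := isOpen_Ioi.inter (hU.preimage (φ.continuous continuous_id continuous_const))
  have hgap : HasProportionalGaps S (3 / 2) := fun t ht => by
    obtain ⟨a, b, hab, hsInf⟩ := hcomp t ht
    refine ⟨a, b, hab, fun s hs hbs => ?_⟩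
    have hgap := hsInf ⟨s, hbs, hs.2⟩
    have hle : sInf {s | b < s ∧ φ s v ∈ U} ≤ s := csInf_le ⟨b, fun _ h => h.1.le⟩ ⟨hbs, hs.2⟩
    linarith
  have hset : ∀ T, {t ∈ Icc (0 : ℝ) T | φ t v ∈ U} = S ∩ Icc 0 T := fun T => by
    ext t
    refine ⟨fun ⟨htT, htU⟩ => ⟨⟨htT.1.lt_of_ne ?_, htU⟩, htT⟩, fun ⟨ht, htT⟩ => ⟨htT, ht.2⟩⟩
    rintro rfl
    exact hv (by simpa using htU)
  calc liminf (fun T : ℝ => (volume {t ∈ Icc (0 : ℝ) T | φ t v ∈ U}).toReal / T) atTop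
      = liminf (fun T => (volume (S ∩ Icc 0 T)).toReal / T) atTop := by simp_rw [hset]
    _ ≤ 1 / (1 + 3 / 2) := hgap.liminf_volume_inter_Icc_div_le hS (fun _ hs => hs.1) (by norm_num)
    _ ≤ 2 / 3 := by norm_num

/-- Abstract dynamical content of Lemma 2. Let `φ` be a continuous flow on a
topological space `X`, `U` open, `v ∉ U` with `φ t₀ v ∈ U` for some `t₀ > 0`. If every
connected component `(t₋₁, t₁)` of `{t > 0 | φ t v ∈ U}` is a bounded open interval, and
whenever `{t > t₁ | φ t v ∈ U}` is nonempty its infimum `t₂` satisfies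
`t₂ - t₁ ≥ (3/2) * (t₁ - t₋₁)`, then
`liminf_{T → ∞} (1/T) * λ({t ∈ [0, T] | φ t v ∈ U}) ≤ 2/3`. -/
theorem ergodic_nongeneric_stmt2 {X : Type*} [TopologicalSpace X]
    (φ : Flow ℝ X) (U : Set X) (hU : IsOpen U) (v : X) (hv : v ∉ U)
    (hvisit : ∃ t₀ : ℝ, 0 < t₀ ∧ φ t₀ v ∈ U)
    (hcomp : ∀ t ∈ {s : ℝ | 0 < s ∧ φ s v ∈ U}, ∃ a b : ℝ,
      connectedComponentIn {s : ℝ | 0 < s ∧ φ s v ∈ U} t = Ioo a b ∧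
      (({s : ℝ | b < s ∧ φ s v ∈ U}).Nonempty →
        (3 / 2) * (b - a) ≤ sInf {s : ℝ | b < s ∧ φ s v ∈ U} - b)) :
    liminf (fun T : ℝ => (volume {t ∈ Icc (0 : ℝ) T | φ t v ∈ U}).toReal / T) atTop
      ≤ 2 / 3 :=
  ergodic_nongeneric_stmt2_general φ U hU v hv hcomp
end

section
/- Let X be a metrizable topological space equipped with its Borel σ-algebra, let φ : ℝ → X → X be a continuous flow on X, and let U, V ⊆ X be open sets with U ∩ V = ∅. Assume that for every v ∈ X with v ∉ U and such that {t > 0 : φ_t(v) ∈ U} is nonempty, one has liminf_{T→∞} (1/T)·λ({t ∈ [0, T] : φ_t(v) ∈ U}) ≤ 2/3. Then there is no Borel probability measure ν on X that is φ-invariant (each map φ_t is measure-preserving for ν) and ergodic for φ (every Borel set A with φ_t^{−1}(A) = A up to ν-null sets for all t ∈ ℝ satisfies ν(A) = 0 or ν(A) = 1) and satisfies both ν(U) > 2/3 and ν(V) > 0. -/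
open Set Filter MeasureTheory ENNReal

set_option linter.unusedSectionVars false

section ErgAux

variable {X : Type*} [TopologicalSpace X] [MeasurableSpace X] [BorelSpace X]
  (φ : Flow ℝ X) (U : Set X)

/-- occupation time set -/
def occSet (x : X) : Set ℝ := {t : ℝ | φ t x ∈ U}

lemma occSet_shift (s : ℝ) (x : X) :
    occSet φ U (φ s x) = (fun t => t + s) ⁻¹' occSet φ U x := by
  ext t
  simp only [occSet, mem_setOf_eq, mem_preimage, ← Flow.map_add]

lemma occSet_measurable (hU : IsOpen U) (x : X) : MeasurableSet (occSet φ U x) := by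
  have : Continuous fun t : ℝ => φ t x := φ.continuous continuous_id continuous_const
  exact hU.measurableSet.preimage this.measurable

/-- Birkhoff-type occupation time over `[0, n)` -/
noncomputable def SnOcc (n : ℕ) (x : X) : ℝ≥0∞ := volume (Ico (0:ℝ) n ∩ occSet φ U x)

lemma SnOcc_le (n : ℕ) (x : X) : SnOcc φ U n x ≤ n := by
  calc volume (Ico (0:ℝ) n ∩ occSet φ U x) ≤ volume (Ico (0:ℝ) n) :=
        measure_mono inter_subset_left
    _ = ENNReal.ofReal ((n:ℝ) - 0) := Real.volume_Ico
    _ ≤ n := by simp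

lemma SnOcc_shift (m n : ℕ) (x : X) :
    volume (Ico (m:ℝ) ((m:ℝ) + n) ∩ occSet φ U x) = SnOcc φ U n (φ (m:ℝ) x) := by
  rw [SnOcc, occSet_shift]
  have h1 : Ico (0:ℝ) n ∩ ((fun t => t + (m:ℝ)) ⁻¹' occSet φ U x)
      = (fun t => t + (m:ℝ)) ⁻¹' (Ico (m:ℝ) ((m:ℝ) + n) ∩ occSet φ U x) := by
    ext t
    simp only [mem_inter_iff, mem_preimage, mem_Ico]
    constructor
    · rintro ⟨⟨h0, hn⟩, ho⟩; exact ⟨⟨by linarith, by linarith⟩, ho⟩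
    · rintro ⟨⟨h0, hn⟩, ho⟩; exact ⟨⟨by linarith, by linarith⟩, ho⟩
  rw [h1, measure_preimage_add_right]

lemma SnOcc_split (hU : IsOpen U) {n N : ℕ} (h : n ≤ N) (x : X) :
    SnOcc φ U N x = SnOcc φ U n x + SnOcc φ U (N - n) (φ (n:ℝ) x) := by
  have hcast : ((n:ℝ) + ((N - n : ℕ) : ℝ)) = (N : ℝ) := by
    push_cast [Nat.cast_sub h]; ring
  rw [← SnOcc_shift φ U n (N - n) x, hcast, SnOcc, SnOcc]
  rw [← measure_union]
  · congr 1
    rw [← union_inter_distrib_right, Ico_union_Ico_eq_Ico (by positivity)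
      (by exact_mod_cast h)]
  · exact (Set.Ico_disjoint_Ico_same).mono inter_subset_left inter_subset_left
  · exact (measurableSet_Ico.inter (occSet_measurable φ U hU x))

lemma SnOcc_sum (hU : IsOpen U) (n : ℕ) (x : X) :
    SnOcc φ U n x = ∑ k ∈ Finset.range n, SnOcc φ U 1 (φ (k:ℝ) x) := by
  induction n with
  | zero => simp [SnOcc]
  | succ n ih =>
    have h := SnOcc_split φ U hU (n := n) (N := n + 1) (Nat.le_succ n) x
    rw [Nat.add_sub_cancel_left] at h
    rw [h, ih, Finset.sum_range_succ]


lemma flow_measurable : Measurable fun p : X × ℝ => φ p.2 p.1 :=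
  (φ.continuous continuous_snd continuous_fst).measurable

lemma flow_measurable_time (s : ℝ) : Measurable (φ s) :=
  (φ.continuous continuous_const continuous_id).measurable

lemma SnOcc_measurable (hU : IsOpen U) (n : ℕ) :
    Measurable fun x => volume (Ico (0:ℝ) n ∩ occSet φ U x) := by
  have hs : MeasurableSet {p : X × ℝ | φ p.2 p.1 ∈ U} :=
    hU.measurableSet.preimage (flow_measurable φ)
  have h := measurable_measure_prodMk_left
    (ν := volume.restrict (Ico (0:ℝ) n)) hs
  convert h using 1
  ext x
  have : Prod.mk x ⁻¹' {p : X × ℝ | φ p.2 p.1 ∈ U} = occSet φ U x := rfl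
  rw [this, Measure.restrict_apply' measurableSet_Ico, inter_comm]



lemma lintegral_SnOcc_one (hU : IsOpen U) (ν : Measure X) [IsProbabilityMeasure ν]
    (hinv : ∀ t : ℝ, MeasurePreserving (φ t) ν ν) :
    ∫⁻ x, SnOcc φ U 1 x ∂ν = ν U := by
  have hocc : ∀ x, MeasurableSet (occSet φ U x) := fun x =>
    hU.measurableSet.preimage (φ.continuous continuous_id continuous_const).measurable
  have key : ∀ x, SnOcc φ U 1 x
      = ∫⁻ t in Ico (0:ℝ) 1, Set.indicator U (fun _ => (1:ℝ≥0∞)) (φ t x) ∂volume := by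
    intro x
    have h1 : (fun t => Set.indicator U (fun _ => (1:ℝ≥0∞)) (φ t x))
        = (occSet φ U x).indicator (fun _ => 1) := by
      ext t; by_cases h : φ t x ∈ U <;> simp [occSet, h]
    rw [h1, lintegral_indicator (hocc x), setLIntegral_one,
      Measure.restrict_apply' measurableSet_Ico, inter_comm, SnOcc]
    norm_num
  have hmeas : Measurable (Function.uncurry fun (x : X) (t : ℝ) =>
      Set.indicator U (fun _ => (1:ℝ≥0∞)) (φ t x)) :=
    (measurable_const.indicator hU.measurableSet).comp (flow_measurable φ)
  calc ∫⁻ x, SnOcc φ U 1 x ∂ν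
      = ∫⁻ x, ∫⁻ t in Ico (0:ℝ) 1,
          Set.indicator U (fun _ => (1:ℝ≥0∞)) (φ t x) ∂volume ∂ν := by
        exact lintegral_congr key
    _ = ∫⁻ t in Ico (0:ℝ) 1, ∫⁻ x,
          Set.indicator U (fun _ => (1:ℝ≥0∞)) (φ t x) ∂ν ∂volume :=
        lintegral_lintegral_swap hmeas.aemeasurable
    _ = ∫⁻ t in Ico (0:ℝ) 1, ν U ∂volume := by
        refine setLIntegral_congr_fun measurableSet_Ico (fun t _ => ?_)
        rw [(hinv t).lintegral_comp (measurable_const.indicator hU.measurableSet),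
          lintegral_indicator hU.measurableSet, setLIntegral_one]
    _ = ν U := by rw [setLIntegral_const]; simp


lemma SnOcc_meas (hU : IsOpen U) (n : ℕ) : Measurable (SnOcc φ U n) :=
  SnOcc_measurable φ U hU n

/-- the "good" set for the maximal-type inequality -/
def ESet (b : ℝ≥0∞) (M : ℕ) : Set X :=
  {x | ∃ n : ℕ, 1 ≤ n ∧ n ≤ M ∧ SnOcc φ U n x < n * b}

lemma ESet_measurable (hU : IsOpen U) (b : ℝ≥0∞) (M : ℕ) :
    MeasurableSet (ESet φ U b M) := by
  have : ESet φ U b M = ⋃ n : ℕ, {x | 1 ≤ n ∧ n ≤ M ∧ SnOcc φ U n x < n * b} := by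
    ext x; simp [ESet]
  rw [this]
  refine MeasurableSet.iUnion fun n => ?_
  by_cases h : 1 ≤ n ∧ n ≤ M
  · have : {x | 1 ≤ n ∧ n ≤ M ∧ SnOcc φ U n x < (n:ℝ≥0∞) * b}
        = {x | SnOcc φ U n x < (n:ℝ≥0∞) * b} := by ext x; simp [h.1, h.2]
    rw [this]
    exact measurableSet_lt (SnOcc_meas φ U hU n) measurable_const
  · have : {x | 1 ≤ n ∧ n ≤ M ∧ SnOcc φ U n x < (n:ℝ≥0∞) * b} = ∅ := by
      ext x; simp only [mem_setOf_eq, mem_empty_iff_false, iff_false]; tauto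
    rw [this]; exact MeasurableSet.empty

/-- the comparison function -/
noncomputable def Gf (b : ℝ≥0∞) (M : ℕ) (x : X) : ℝ≥0∞ :=
  b + (ESet φ U b M)ᶜ.indicator (fun _ => 1) x

lemma Gf_meas (hU : IsOpen U) (b : ℝ≥0∞) (M : ℕ) : Measurable (Gf φ U b M) :=
  measurable_const.add
    (measurable_const.indicator (ESet_measurable φ U hU b M).compl)

lemma b_le_Gf (b : ℝ≥0∞) (M : ℕ) (x : X) : b ≤ Gf φ U b M x := self_le_add_right _ _

/-- the key covering inequality -/
lemma cover_ineq (hU : IsOpen U) (b : ℝ≥0∞) (M : ℕ) :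
    ∀ N : ℕ, ∀ x : X, SnOcc φ U N x
      ≤ (∑ k ∈ Finset.range N, Gf φ U b M (φ (k:ℝ) x)) + ((min N M : ℕ) : ℝ≥0∞) := by
  intro N
  induction N using Nat.strong_induction_on with
  | _ N ih =>
  rcases Nat.eq_zero_or_pos N with rfl | hN
  · intro x; simp [SnOcc]
  intro x
  by_cases hx : x ∈ ESet φ U b M
  · obtain ⟨n, hn1, hnM, hnb⟩ := hx
    by_cases hnN : n ≤ N
    · have hsplit := SnOcc_split φ U hU hnN x
      have h1 := ih (N - n) (by omega) (φ (n:ℝ) x)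
      have hcomp : ∀ k : ℕ, Gf φ U b M (φ (k:ℝ) (φ (n:ℝ) x))
          = Gf φ U b M (φ (((n + k : ℕ)):ℝ) x) := by
        intro k
        rw [← Flow.map_add]
        congr 2
        push_cast; ring
      rw [Finset.sum_congr rfl (fun k _ => hcomp k)] at h1
      calc SnOcc φ U N x = SnOcc φ U n x + SnOcc φ U (N - n) (φ (n:ℝ) x) := hsplit
        _ ≤ (n : ℝ≥0∞) * b + ((∑ k ∈ Finset.range (N - n),
              Gf φ U b M (φ (((n + k : ℕ)):ℝ) x)) + ((min (N - n) M : ℕ) : ℝ≥0∞)) :=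
            add_le_add hnb.le h1
        _ ≤ (∑ k ∈ Finset.range n, Gf φ U b M (φ (k:ℝ) x))
            + ((∑ k ∈ Finset.Ico n N, Gf φ U b M (φ (k:ℝ) x)) + ((min N M : ℕ) : ℝ≥0∞)) := by
            refine add_le_add ?_ (add_le_add ?_ ?_)
            · have := Finset.card_nsmul_le_sum (Finset.range n)
                (fun k : ℕ => Gf φ U b M (φ (k:ℝ) x)) b (fun k _ => b_le_Gf φ U b M _)
              simpa [nsmul_eq_mul, mul_comm] using this
            · rw [Finset.sum_Ico_eq_sum_range]
            · exact Nat.cast_le.2 (by omega)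
        _ = (∑ k ∈ Finset.range N, Gf φ U b M (φ (k:ℝ) x)) + ((min N M : ℕ) : ℝ≥0∞) := by
            rw [← add_assoc, Finset.sum_range_add_sum_Ico _ hnN]
    · have h2 : ((N:ℕ) : ℝ≥0∞) = ((min N M : ℕ) : ℝ≥0∞) := by congr 1; omega
      calc SnOcc φ U N x ≤ (N : ℝ≥0∞) := SnOcc_le φ U N x
        _ ≤ _ := by rw [h2]; exact le_add_self
  · have hsplit := SnOcc_split φ U hU (n := 1) (N := N) hN x
    have h1 := ih (N - 1) (by omega) (φ ((1:ℕ):ℝ) x)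
    have hS1 : SnOcc φ U 1 x ≤ Gf φ U b M x := by
      have hle : SnOcc φ U 1 x ≤ 1 := by simpa using SnOcc_le φ U 1 x
      refine hle.trans ?_
      unfold Gf
      rw [indicator_of_mem (by simpa using hx)]
      exact le_add_self
    have hcomp : ∀ k : ℕ, Gf φ U b M (φ (k:ℝ) (φ ((1:ℕ):ℝ) x))
        = Gf φ U b M (φ (((k + 1 : ℕ)):ℝ) x) := by
      intro k
      rw [← Flow.map_add]
      congr 2
      push_cast; ring
    rw [Finset.sum_congr rfl (fun k _ => hcomp k)] at h1
    have hre : ∑ k ∈ Finset.range N, Gf φ U b M (φ (k:ℝ) x)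
        = (∑ k ∈ Finset.range (N - 1), Gf φ U b M (φ (((k + 1 : ℕ)):ℝ) x))
          + Gf φ U b M x := by
      have hN1 : N = (N - 1) + 1 := by omega
      conv_lhs => rw [hN1, Finset.sum_range_succ']
      congr 1
      simp [Flow.map_zero]
    calc SnOcc φ U N x = SnOcc φ U 1 x + SnOcc φ U (N - 1) (φ ((1:ℕ):ℝ) x) := by
          exact_mod_cast hsplit
      _ ≤ Gf φ U b M x + ((∑ k ∈ Finset.range (N - 1),
            Gf φ U b M (φ (((k + 1 : ℕ)):ℝ) x)) + ((min (N - 1) M : ℕ) : ℝ≥0∞)) :=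
          add_le_add hS1 h1
      _ ≤ (∑ k ∈ Finset.range N, Gf φ U b M (φ (k:ℝ) x)) + ((min N M : ℕ) : ℝ≥0∞) := by
          rw [hre]
          calc Gf φ U b M x + ((∑ k ∈ Finset.range (N - 1),
                Gf φ U b M (φ (((k + 1 : ℕ)):ℝ) x)) + ((min (N - 1) M : ℕ) : ℝ≥0∞))
              ≤ Gf φ U b M x + ((∑ k ∈ Finset.range (N - 1),
                Gf φ U b M (φ (((k + 1 : ℕ)):ℝ) x)) + ((min N M : ℕ) : ℝ≥0∞)) := by
                refine add_le_add_right (add_le_add_right (Nat.cast_le.2 (by omega)) _) _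
            _ = _ := by ring

lemma lint_SnOcc (hU : IsOpen U) (ν : Measure X) [IsProbabilityMeasure ν]
    (hinv : ∀ t : ℝ, MeasurePreserving (φ t) ν ν) (N : ℕ) :
    ∫⁻ x, SnOcc φ U N x ∂ν = N * ν U := by
  calc ∫⁻ x, SnOcc φ U N x ∂ν
      = ∫⁻ x, ∑ k ∈ Finset.range N, SnOcc φ U 1 (φ (k:ℝ) x) ∂ν :=
        lintegral_congr (SnOcc_sum φ U hU N)
    _ = ∑ k ∈ Finset.range N, ∫⁻ x, SnOcc φ U 1 (φ (k:ℝ) x) ∂ν :=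
        lintegral_finset_sum _ (fun k _ =>
          (SnOcc_meas φ U hU 1).comp (flow_measurable_time φ _))
    _ = ∑ _k ∈ Finset.range N, ν U := by
        refine Finset.sum_congr rfl fun k _ => ?_
        rw [(hinv _).lintegral_comp (SnOcc_meas φ U hU 1),
          lintegral_SnOcc_one φ U hU ν hinv]
    _ = N * ν U := by simp [Finset.sum_const, nsmul_eq_mul]

lemma lint_Gf (hU : IsOpen U) (ν : Measure X) [IsProbabilityMeasure ν]
    (b : ℝ≥0∞) (M : ℕ) :
    ∫⁻ x, Gf φ U b M x ∂ν = b + ν (ESet φ U b M)ᶜ := by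
  unfold Gf
  rw [lintegral_add_left measurable_const, lintegral_const,
    lintegral_indicator (ESet_measurable φ U hU b M).compl, setLIntegral_one]
  simp

lemma int_ineq (hU : IsOpen U) (ν : Measure X) [IsProbabilityMeasure ν]
    (hinv : ∀ t : ℝ, MeasurePreserving (φ t) ν ν) (b : ℝ≥0∞) (M : ℕ) (N : ℕ) :
    (N : ℝ≥0∞) * ν U ≤ (N : ℝ≥0∞) * (b + ν (ESet φ U b M)ᶜ) + M := by
  have h := lintegral_mono (μ := ν) (fun x => cover_ineq φ U hU b M N x)
  rw [lint_SnOcc φ U hU ν hinv N] at h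
  refine h.trans ?_
  rw [lintegral_add_right _ measurable_const, lintegral_const]
  have h1 : ∫⁻ x, ∑ k ∈ Finset.range N, Gf φ U b M (φ (k:ℝ) x) ∂ν
      = (N : ℝ≥0∞) * (b + ν (ESet φ U b M)ᶜ) := by
    calc ∫⁻ x, ∑ k ∈ Finset.range N, Gf φ U b M (φ (k:ℝ) x) ∂ν
        = ∑ k ∈ Finset.range N, ∫⁻ x, Gf φ U b M (φ (k:ℝ) x) ∂ν :=
          lintegral_finset_sum _ (fun k _ =>
            (Gf_meas φ U hU b M).comp (flow_measurable_time φ _))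
      _ = ∑ _k ∈ Finset.range N, (b + ν (ESet φ U b M)ᶜ) :=
          Finset.sum_congr rfl (fun k _ => by
            rw [(hinv _).lintegral_comp (Gf_meas φ U hU b M), lint_Gf φ U hU ν b M])
      _ = (N : ℝ≥0∞) * (b + ν (ESet φ U b M)ᶜ) := by
          simp [Finset.sum_const, nsmul_eq_mul, mul_add]
  rw [h1]
  simp only [measure_univ, mul_one]
  exact add_le_add_right (Nat.cast_le.2 (min_le_right N M)) _

lemma ennreal_div_limit {u q : ℝ≥0∞} (hu : u ≤ 1) (hq : q ≠ ⊤) (M : ℕ)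
    (H : ∀ N : ℕ, (N : ℝ≥0∞) * u ≤ (N : ℝ≥0∞) * q + M) : u ≤ q := by
  by_contra hlt
  push_neg at hlt
  obtain ⟨c, hqc, hcu⟩ := exists_between hlt
  have hcfin : c ≠ ⊤ := ne_top_of_lt (hcu.trans_le hu)
  have hqR : q.toReal < c.toReal := (ENNReal.toReal_lt_toReal hq hcfin).2 hqc
  obtain ⟨N, hN⟩ := exists_nat_gt ((M : ℝ) / (c.toReal - q.toReal))
  have h1 : (N:ℝ≥0∞) * c ≤ (N:ℝ≥0∞) * q + M :=
    le_trans (mul_le_mul_right hcu.le _) (H N)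
  have hfin : (N:ℝ≥0∞) * q + (M:ℝ≥0∞) ≠ ⊤ := by finiteness
  have h2 := ENNReal.toReal_mono hfin h1
  rw [ENNReal.toReal_add (by finiteness) (by finiteness), ENNReal.toReal_mul,
    ENNReal.toReal_mul] at h2
  simp only [ENNReal.toReal_natCast] at h2
  have hpos : (0:ℝ) < c.toReal - q.toReal := by linarith
  rw [div_lt_iff₀ hpos] at hN
  nlinarith [h2, hN]

noncomputable def gLim (x : X) : ℝ≥0∞ := liminf (fun n : ℕ => SnOcc φ U n x / n) atTop

lemma gLim_meas (hU : IsOpen U) : Measurable (gLim φ U) :=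
  Measurable.liminf (fun n => (SnOcc_meas φ U hU n).div_const _)

lemma gLim_le_one (x : X) : gLim φ U x ≤ 1 := by
  apply liminf_le_of_frequently_le'
  refine (eventually_atTop.2 ⟨1, fun n _ => ?_⟩).frequently
  exact ENNReal.div_le_of_le_mul (by simpa [one_mul] using SnOcc_le φ U n x)

lemma SnOcc_real_shift (s : ℝ) (n : ℕ) (x : X) :
    SnOcc φ U n (φ s x) ≤ SnOcc φ U n x
      + (ENNReal.ofReal |s| + ENNReal.ofReal |s|) := by
  have h1 : SnOcc φ U n (φ s x) = volume (Ico s (s + (n:ℝ)) ∩ occSet φ U x) := by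
    rw [SnOcc, occSet_shift]
    have heq : Ico (0:ℝ) n ∩ ((fun t => t + s) ⁻¹' occSet φ U x)
        = (fun t => t + s) ⁻¹' (Ico s (s + (n:ℝ)) ∩ occSet φ U x) := by
      ext t
      simp only [mem_inter_iff, mem_preimage, mem_Ico]
      constructor
      · rintro ⟨⟨h0, hn⟩, ho⟩; exact ⟨⟨by linarith, by linarith⟩, ho⟩
      · rintro ⟨⟨h0, hn⟩, ho⟩; exact ⟨⟨by linarith, by linarith⟩, ho⟩
    rw [heq, measure_preimage_add_right]
  rw [h1]
  have hsub : Ico s (s + (n:ℝ)) ∩ occSet φ U x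
      ⊆ (Ico (-|s|) 0 ∪ (Ico (0:ℝ) n ∩ occSet φ U x)) ∪ Ico (n:ℝ) ((n:ℝ) + |s|) := by
    rintro t ⟨⟨hts, htn⟩, hto⟩
    rcases lt_or_ge t 0 with h0 | h0
    · exact Or.inl (Or.inl ⟨(neg_abs_le s).trans hts, h0⟩)
    rcases lt_or_ge t n with h1' | h1'
    · exact Or.inl (Or.inr ⟨⟨h0, h1'⟩, hto⟩)
    · refine Or.inr ⟨h1', ?_⟩
      have := le_abs_self s
      linarith
  calc volume (Ico s (s + (n:ℝ)) ∩ occSet φ U x)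
      ≤ volume ((Ico (-|s|) 0 ∪ (Ico (0:ℝ) n ∩ occSet φ U x))
          ∪ Ico (n:ℝ) ((n:ℝ) + |s|)) := measure_mono hsub
    _ ≤ (volume (Ico (-|s|) (0:ℝ)) + volume (Ico (0:ℝ) n ∩ occSet φ U x))
        + volume (Ico (n:ℝ) ((n:ℝ) + |s|)) :=
        le_trans (measure_union_le _ _) (add_le_add_left (measure_union_le _ _) _)
    _ = SnOcc φ U n x + (ENNReal.ofReal |s| + ENNReal.ofReal |s|) := by
        rw [Real.volume_Ico, Real.volume_Ico]
        rw [show (0:ℝ) - -|s| = |s| by ring, show (n:ℝ) + |s| - n = |s| by ring]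
        rw [SnOcc]
        ring

lemma gLim_comp_le (s : ℝ) (x : X) : gLim φ U (φ s x) ≤ gLim φ U x := by
  refine ENNReal.le_of_forall_pos_le_add fun ε hε htop => ?_
  set C : ℝ≥0∞ := ENNReal.ofReal |s| + ENNReal.ofReal |s| with hC
  have hCfin : C ≠ ⊤ := by finiteness
  have hε0 : ((ε:ℝ≥0∞)) ≠ 0 := by exact_mod_cast hε.ne'
  have hε2 : ((ε:ℝ≥0∞)/2) ≠ 0 := by
    simp [ENNReal.div_eq_zero_iff, hε0]
  have hε2top : ((ε:ℝ≥0∞)/2) ≠ ⊤ :=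
    (ENNReal.div_lt_top ENNReal.coe_ne_top (by norm_num)).ne
  obtain ⟨N, hN⟩ := ENNReal.exists_nat_gt
    ((ENNReal.div_lt_top hCfin hε2).ne : C / ((ε:ℝ≥0∞)/2) ≠ ⊤)
  have hCN : C ≤ ((ε:ℝ≥0∞)/2) * N := by
    have := (ENNReal.div_le_iff hε2 hε2top).1 hN.le
    rwa [mul_comm] at this
  have hev : ∀ᶠ n : ℕ in atTop, C / (n:ℝ≥0∞) ≤ (ε:ℝ≥0∞)/2 := by
    filter_upwards [eventually_ge_atTop (N + 1)] with n hn
    have hn0 : ((n:ℝ≥0∞)) ≠ 0 := by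
      simp only [ne_eq, Nat.cast_eq_zero]; omega
    rw [ENNReal.div_le_iff hn0 (ENNReal.natCast_ne_top n)]
    refine hCN.trans ?_
    exact mul_le_mul_right (by exact_mod_cast (by omega : N ≤ n)) _
  have hfreq : ∃ᶠ n : ℕ in atTop, SnOcc φ U n x / n < gLim φ U x + (ε:ℝ≥0∞)/2 :=
    frequently_lt_of_liminf_lt (by isBoundedDefault)
      (ENNReal.lt_add_right htop.ne hε2)
  have hfreq2 : ∃ᶠ n : ℕ in atTop,
      SnOcc φ U n (φ s x) / n ≤ gLim φ U x + (ε:ℝ≥0∞) := by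
    refine (hfreq.and_eventually hev).mono ?_
    rintro n ⟨h1, h2⟩
    calc SnOcc φ U n (φ s x) / n ≤ (SnOcc φ U n x + C) / n := by
          gcongr
          exact SnOcc_real_shift φ U s n x
      _ = SnOcc φ U n x / n + C / n := ENNReal.add_div
      _ ≤ (gLim φ U x + (ε:ℝ≥0∞)/2) + (ε:ℝ≥0∞)/2 := add_le_add h1.le h2
      _ = gLim φ U x + (ε:ℝ≥0∞) := by
          rw [add_assoc, ENNReal.add_halves]
  exact liminf_le_of_frequently_le' hfreq2

lemma gLim_comp_eq (s : ℝ) (x : X) : gLim φ U (φ s x) = gLim φ U x := by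
  refine le_antisymm (gLim_comp_le φ U s x) ?_
  have h := gLim_comp_le φ U (-s) (φ s x)
  rw [← Flow.map_add, neg_add_cancel] at h
  simpa [Flow.map_zero] using h

end ErgAux

/-- If `U` and `V` are disjoint open sets and every point `v ∉ U` whose
forward orbit meets `U` spends asymptotically at most `2/3` of its time in `U` (in the
liminf sense), then there is no φ-invariant ergodic Borel probability measure `ν` with
`ν U > 2/3` and `ν V > 0`. -/
theorem ergodic_nongeneric_stmt3 {X : Type*} [TopologicalSpace X]
    [TopologicalSpace.MetrizableSpace X] [MeasurableSpace X] [BorelSpace X]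
    (φ : Flow ℝ X) (U V : Set X) (hU : IsOpen U) (hV : IsOpen V) (hUV : U ∩ V = ∅)
    (hlim : ∀ v : X, v ∉ U → {t : ℝ | 0 < t ∧ φ t v ∈ U}.Nonempty →
      liminf (fun T : ℝ => (volume {t ∈ Icc (0 : ℝ) T | φ t v ∈ U}).toReal / T) atTop
        ≤ 2 / 3) :
    ¬ ∃ ν : Measure X, IsProbabilityMeasure ν ∧
      (∀ t : ℝ, MeasurePreserving (φ t) ν ν) ∧
      (∀ A : Set X, MeasurableSet A → (∀ t : ℝ, (φ t ⁻¹' A : Set X) =ᵐ[ν] A) →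
        ν A = 0 ∨ ν A = 1) ∧
      (2 / 3 : ℝ≥0∞) < ν U ∧ 0 < ν V := by
  rintro ⟨ν, hprob, hinv, herg, hνU, hνV⟩
  set D : Set X := {x : X | gLim φ U x ≤ 2/3} with hD
  have hDmeas : MeasurableSet D :=
    measurableSet_le (gLim_meas φ U hU) measurable_const
  have hDinv : ∀ t : ℝ, φ t ⁻¹' D = D := by
    intro t; ext x
    simp only [mem_preimage, hD, mem_setOf_eq, gLim_comp_eq φ U t x]
  rcases herg D hDmeas (fun t => by rw [hDinv t]; exact EventuallyEq.rfl) with hD0 | hD1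
  · -- ν D = 0 : a.e. point has liminf occupation > 2/3, contradict `hlim`
    have hVD : ν (V \ D) = ν V := measure_diff_null hD0
    obtain ⟨v, hvV, hvD⟩ : (V \ D).Nonempty :=
      nonempty_of_measure_ne_zero (by rw [hVD]; exact hνV.ne')
    have hgv : (2/3 : ℝ≥0∞) < gLim φ U v := not_le.1 hvD
    have hvU : v ∉ U := fun hvU' => by
      have : v ∈ U ∩ V := ⟨hvU', hvV⟩
      rw [hUV] at this
      exact this
    obtain ⟨r, hr1, hr2⟩ := exists_between hgv
    have hrfin : r ≠ ⊤ := ne_top_of_lt (hr2.trans_le (gLim_le_one φ U v))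
    have h23 : ((2/3 : ℝ≥0∞)).toReal = 2/3 := by
      rw [ENNReal.toReal_div]; norm_num
    have hrR : (2:ℝ)/3 < r.toReal := by
      have := (ENNReal.toReal_lt_toReal (ne_top_of_lt hr1) hrfin).2 hr1
      rwa [h23] at this
    have hev : ∀ᶠ n : ℕ in atTop, r < SnOcc φ U n v / n :=
      eventually_lt_of_lt_liminf hr2
    obtain ⟨N₀, hN₀⟩ := eventually_atTop.1 hev
    -- the forward orbit of v meets U
    have hhit : {t : ℝ | 0 < t ∧ φ t v ∈ U}.Nonempty := by
      have h := hN₀ (max N₀ 1) (le_max_left _ _)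
      have hpos : SnOcc φ U (max N₀ 1) v ≠ 0 := by
        intro h0
        rw [h0, ENNReal.zero_div] at h
        exact (not_lt.2 (zero_le : (0:ℝ≥0∞) ≤ r)) h
      have h2 : volume ((Ico (0:ℝ) ((max N₀ 1 : ℕ):ℝ) ∩ occSet φ U v) \ {0}) ≠ 0 := by
        rw [measure_diff_null Real.volume_singleton]
        exact hpos
      obtain ⟨t, ⟨⟨ht0, _⟩, hto⟩, htne⟩ := nonempty_of_measure_ne_zero h2
      exact ⟨t, lt_of_le_of_ne ht0 (Ne.symm (by simpa using htne)), hto⟩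
    have hlimv := hlim v hvU hhit
    set rR := r.toReal with hrRdef
    set r2 : ℝ := (2/3 + rR)/2 with hr2def
    have hr2a : 2/3 < r2 := by rw [hr2def]; linarith
    have hr2b : r2 < rR := by rw [hr2def]; linarith
    obtain ⟨N₁, hN₁⟩ := exists_nat_gt (max (N₀:ℝ) (max 1 (r2 / (rR - r2))))
    have hN₁0 : (N₀:ℝ) < N₁ := lt_of_le_of_lt (le_max_left _ _) hN₁
    have hN₁1 : (1:ℝ) < N₁ := lt_of_le_of_lt (le_max_of_le_right (le_max_left _ _)) hN₁
    have hN₁r : r2 / (rR - r2) < N₁ :=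
      lt_of_le_of_lt (le_max_of_le_right (le_max_right _ _)) hN₁
    have hevT : ∀ᶠ T : ℝ in atTop,
        r2 ≤ (volume {t ∈ Icc (0:ℝ) T | φ t v ∈ U}).toReal / T := by
      filter_upwards [eventually_ge_atTop ((N₁:ℝ))] with T hT
      have hTpos : (0:ℝ) < T := lt_of_lt_of_le (by linarith) hT
      set n := ⌊T⌋₊ with hn
      have hnN₁ : N₁ ≤ n := Nat.le_floor hT
      have hnN₀ : N₀ ≤ n := le_trans (by exact_mod_cast hN₁0.le) hnN₁
      have hN1nat : 1 ≤ N₁ := by exact_mod_cast hN₁1.le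
      have hn0 : ((n:ℝ≥0∞)) ≠ 0 := by
        simp only [ne_eq, Nat.cast_eq_zero]
        omega
      have hnT : (n:ℝ) ≤ T := Nat.floor_le hTpos.le
      have hTn1 : T < (n:ℝ) + 1 := Nat.lt_floor_add_one T
      have hrn := hN₀ n hnN₀
      have hSn : (r * n : ℝ≥0∞) < SnOcc φ U n v :=
        (ENNReal.lt_div_iff_mul_lt (Or.inl hn0)
          (Or.inl (ENNReal.natCast_ne_top n))).1 hrn
      have hsetle : Ico (0:ℝ) n ∩ occSet φ U v ⊆ {t ∈ Icc (0:ℝ) T | φ t v ∈ U} := by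
        rintro t ⟨⟨h1, h2⟩, h3⟩
        exact ⟨⟨h1, le_trans h2.le hnT⟩, h3⟩
      have hvfin : volume {t ∈ Icc (0:ℝ) T | φ t v ∈ U} ≠ ⊤ := by
        refine ne_top_of_le_ne_top ?_ (measure_mono (fun t ht => ht.1))
        rw [Real.volume_Icc]
        exact ENNReal.ofReal_ne_top
      have hvolle : (r * n : ℝ≥0∞) ≤ volume {t ∈ Icc (0:ℝ) T | φ t v ∈ U} :=
        le_trans hSn.le (measure_mono hsetle)
      have htoR : (n:ℝ) * rR ≤ (volume {t ∈ Icc (0:ℝ) T | φ t v ∈ U}).toReal := by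
        have h := ENNReal.toReal_mono hvfin hvolle
        rw [ENNReal.toReal_mul] at h
        simp only [ENNReal.toReal_natCast] at h
        rw [hrRdef]
        linarith [h]
      have hrRpos : (0:ℝ) < rR := lt_trans (by norm_num) hrR
      have hnn : (0:ℝ) ≤ (n:ℝ) * rR := by positivity
      have step1 : (n:ℝ) * rR / T ≤ (volume {t ∈ Icc (0:ℝ) T | φ t v ∈ U}).toReal / T := by
        gcongr
      have step2 : r2 ≤ (n:ℝ) * rR / T := by
        rw [le_div_iff₀ hTpos]
        have hd : (0:ℝ) < rR - r2 := by linarith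
        have h3 : r2 < (N₁:ℝ) * (rR - r2) := (div_lt_iff₀ hd).1 hN₁r
        have h4 : (N₁:ℝ) ≤ n := by exact_mod_cast hnN₁
        nlinarith [h3, h4, hTn1, hr2a]
      exact le_trans step2 step1
    have hco : IsCoboundedUnder (· ≥ ·) atTop
        (fun T : ℝ => (volume {t ∈ Icc (0:ℝ) T | φ t v ∈ U}).toReal / T) := by
      refine IsBoundedUnder.isCoboundedUnder_ge (isBoundedUnder_of ⟨1, fun T => ?_⟩)
      rcases le_or_gt T 0 with hT | hT
      · have hz : volume {t ∈ Icc (0:ℝ) T | φ t v ∈ U} = 0 := by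
          refine measure_mono_null (fun t ht => ht.1) ?_
          rw [Real.volume_Icc]
          simp [ENNReal.ofReal_eq_zero]
          linarith
        rw [hz]
        simp
      · rw [div_le_one hT]
        refine ENNReal.toReal_le_of_le_ofReal hT.le ?_
        refine le_trans (measure_mono (fun t ht => ht.1)) ?_
        rw [Real.volume_Icc]
        exact ENNReal.ofReal_le_ofReal (by linarith)
    have hfin := le_liminf_of_le hco hevT
    linarith [hlimv, hfin, hr2a]
  · -- ν D = 1 : maximal inequality gives ν U ≤ b < ν U
    obtain ⟨b, hb1, hb2⟩ := exists_between hνU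
    have hbfin : b ≠ ⊤ := ne_top_of_lt (hb2.trans_le prob_le_one)
    have hEmono : Monotone (fun M => ESet φ U b M) := by
      rintro M M' h x ⟨n, h1, h2, h3⟩
      exact ⟨n, h1, h2.trans h, h3⟩
    have hDE : D ⊆ ⋃ M, ESet φ U b M := by
      intro x hx
      have hx' : gLim φ U x < b := lt_of_le_of_lt hx hb1
      have hfreq : ∃ᶠ n : ℕ in atTop, SnOcc φ U n x / n < b :=
        frequently_lt_of_liminf_lt (by isBoundedDefault) hx'
      obtain ⟨n, hnb, hn1⟩ := (hfreq.and_eventually (eventually_ge_atTop 1)).exists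
      have hn0 : ((n:ℝ≥0∞)) ≠ 0 := by
        simp only [ne_eq, Nat.cast_eq_zero]
        omega
      refine mem_iUnion.2 ⟨n, n, hn1, le_refl n, ?_⟩
      have := (ENNReal.div_lt_iff (Or.inl hn0)
        (Or.inl (ENNReal.natCast_ne_top n))).1 hnb
      rwa [mul_comm] at this
    have hnull : ν (⋂ M, (ESet φ U b M)ᶜ) = 0 := by
      rw [← compl_iUnion]
      exact measure_mono_null (compl_subset_compl.2 hDE)
        ((prob_compl_eq_zero_iff hDmeas).2 hD1)
    have htend : Tendsto (fun M => ν (ESet φ U b M)ᶜ) atTop (nhds 0) := by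
      have h := tendsto_measure_iInter_atTop
        (fun M => ((ESet_measurable φ U hU b M).compl).nullMeasurableSet)
        (fun M M' h => compl_subset_compl.2 (hEmono h)) ⟨0, measure_ne_top ν _⟩
      rwa [hnull] at h
    have hle : ∀ M : ℕ, ν U ≤ b + ν (ESet φ U b M)ᶜ := fun M =>
      ennreal_div_limit prob_le_one
        (ENNReal.add_ne_top.2 ⟨hbfin, measure_ne_top ν _⟩) M
        (fun N => int_ineq φ U hU ν hinv b M N)
    have hfinal : ν U ≤ b := by
      have h2 : Tendsto (fun M => b + ν (ESet φ U b M)ᶜ) atTop (nhds b) := by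
        simpa using tendsto_const_nhds.add htend
      exact ge_of_tendsto' h2 hle
    exact absurd hfinal (not_le.2 hb2)
end

section
/- Let E be a real normed vector space, let x, p ∈ E and r > 0 with ‖p − x‖ < r, and let u ∈ E with ‖u‖ = 1. Define γ(s) = p + s·u for s ∈ ℝ, and set s₁ = inf{s > 0 : ‖γ(s) − x‖ ≥ r} and s₂ = inf{s > 0 : ‖γ(s) − x‖ ≥ 4r}. Then s₁ and s₂ are finite, s₁ ≤ 2r, s₂ − s₁ ≥ 3r, and for every s with s₁ < s < s₂ one has r ≤ ‖γ(s) − x‖ < 4r (i.e., γ(s) lies in the closed annulus between the balls of radius r and 4r around x). -/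
/-!
Write `f s = ‖p + s • u - x‖`: it is convex, 1-Lipschitz, `f 0 < r` and `f s ≥ s - ‖p - x‖`.
By continuity `f` equals `r` at the first hitting time `s₁` of level `r`, and convexity keeps it
`≥ r` afterwards, since `f 0 < r`. Being 1-Lipschitz, `f` needs time at least `3r` to go on from
`r` to `4r`.
-/

open Set

/-- Equals `0` when the level `c` is never reached at positive times. -/
noncomputable def firstHittingTime (f : ℝ → ℝ) (c : ℝ) : ℝ :=
  sInf {s | 0 < s ∧ c ≤ f s}

section FirstHittingTime

variable {f : ℝ → ℝ} {c d s : ℝ}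

lemma firstHittingTime_nonneg (f : ℝ → ℝ) (c : ℝ) : 0 ≤ firstHittingTime f c :=
  Real.sInf_nonneg fun _ hs => hs.1.le

lemma bddBelow_hittingSet (f : ℝ → ℝ) (c : ℝ) : BddBelow {s | 0 < s ∧ c ≤ f s} :=
  ⟨0, fun _ hs => hs.1.le⟩

lemma firstHittingTime_le (hs : 0 < s) (h : c ≤ f s) : firstHittingTime f c ≤ s :=
  csInf_le (bddBelow_hittingSet f c) ⟨hs, h⟩

lemma apply_lt_of_lt_firstHittingTime (hs : 0 < s) (h : s < firstHittingTime f c) : f s < c :=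
  lt_of_not_ge fun hc => (firstHittingTime_le hs hc).not_gt h

lemma le_apply_firstHittingTime (hf : Continuous f) (hne : {s | 0 < s ∧ c ≤ f s}.Nonempty) :
    c ≤ f (firstHittingTime f c) := by
  have hclosed : IsClosed {s | c ≤ f s} := isClosed_le continuous_const hf
  have hsub : closure {s | 0 < s ∧ c ≤ f s} ⊆ {s | c ≤ f s} :=
    hclosed.closure_subset_iff.2 fun _ hs => hs.2
  exact hsub (csInf_mem_closure hne (bddBelow_hittingSet f c))

lemma apply_firstHittingTime_le (hf : Continuous f) (h0 : f 0 ≤ c) :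
    f (firstHittingTime f c) ≤ c := by
  rcases (firstHittingTime_nonneg f c).eq_or_lt with hT | hT
  · rwa [← hT]
  have hclosed : IsClosed {s | f s ≤ c} := isClosed_le hf continuous_const
  have hsub : closure (Ioo 0 (firstHittingTime f c)) ⊆ {s | f s ≤ c} :=
    hclosed.closure_subset_iff.2 fun _ hs => (apply_lt_of_lt_firstHittingTime hs.1 hs.2).le
  exact hsub (by rw [closure_Ioo hT.ne]; exact right_mem_Icc.2 hT.le)

lemma firstHittingTime_pos (hf : Continuous f) (h0 : f 0 < c)
    (hne : {s | 0 < s ∧ c ≤ f s}.Nonempty) : 0 < firstHittingTime f c := by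
  refine (firstHittingTime_nonneg f c).lt_of_ne fun hT => ?_
  have := le_apply_firstHittingTime hf hne
  rw [← hT] at this
  linarith

lemma firstHittingTime_add_sub_le (hf : LipschitzWith 1 f) (h0 : f 0 ≤ c) (hcd : c ≤ d)
    (hne : {s | 0 < s ∧ d ≤ f s}.Nonempty) :
    firstHittingTime f c + (d - c) ≤ firstHittingTime f d := by
  refine le_csInf hne fun t ⟨ht, hdt⟩ => ?_
  have hTt : firstHittingTime f c ≤ t := firstHittingTime_le ht (hcd.trans hdt)
  have hlip := hf.le_add_mul t (firstHittingTime f c)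
  rw [Real.dist_eq, abs_of_nonneg (sub_nonneg.2 hTt), NNReal.coe_one, one_mul] at hlip
  linarith [apply_firstHittingTime_le hf.continuous h0]

lemma le_apply_of_firstHittingTime_lt (hconv : ConvexOn ℝ (Ici 0) f) (hf : Continuous f)
    (h0 : f 0 < c) (hne : {s | 0 < s ∧ c ≤ f s}.Nonempty) (hs : firstHittingTime f c < s) :
    c ≤ f s := by
  have hT := firstHittingTime_pos hf h0 hne
  have hcT := le_apply_firstHittingTime hf hne
  have hseg : firstHittingTime f c ∈ openSegment ℝ 0 s := by
    rw [openSegment_eq_Ioo (hT.trans hs)]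
    exact ⟨hT, hs⟩
  exact hcT.trans <| hconv.le_right_of_left_le (mem_Ici.2 le_rfl) (hT.trans hs).le hseg (h0.le.trans hcT)

end FirstHittingTime

section Line

variable {E : Type*} [NormedAddCommGroup E] [NormedSpace ℝ E]

lemma convexOn_norm_add_smul_sub (p u x : E) : ConvexOn ℝ univ fun s : ℝ => ‖p + s • u - x‖ := by
  have h : (fun s : ℝ => ‖p + s • u - x‖) = norm ∘ AffineMap.lineMap (p - x) (p + u - x) := by
    ext s
    rw [Function.comp_apply, AffineMap.lineMap_apply, vadd_eq_add, vsub_eq_sub]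
    congr 1
    module
  rw [h]
  exact convexOn_univ_norm.comp_affineMap _

lemma lipschitzWith_norm_add_smul_sub (p x : E) {u : E} (hu : ‖u‖ = 1) :
    LipschitzWith 1 fun s : ℝ => ‖p + s • u - x‖ := by
  refine LipschitzWith.of_dist_le_mul fun s t => ?_
  have h : p + s • u - x - (p + t • u - x) = (s - t) • u := by module
  rw [Real.dist_eq, Real.dist_eq, NNReal.coe_one, one_mul]
  calc |‖p + s • u - x‖ - ‖p + t • u - x‖| ≤ ‖p + s • u - x - (p + t • u - x)‖ :=
        abs_norm_sub_norm_le _ _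
    _ = |s - t| := by rw [h, norm_smul, hu, Real.norm_eq_abs, mul_one]

lemma sub_norm_le_norm_add_smul_sub (p x : E) {u : E} (hu : ‖u‖ = 1) (s : ℝ) :
    s - ‖p - x‖ ≤ ‖p + s • u - x‖ := by
  have h : p + s • u - x - (p - x) = s • u := by abel
  have := norm_sub_le (p + s • u - x) (p - x)
  rw [h, norm_smul, hu, Real.norm_eq_abs, mul_one] at this
  linarith [le_abs_self s]

end Line

/-- Lemma 1 for normed vector spaces. If `‖p - x‖ < r` and `‖u‖ = 1`, set
`γ s = p + s • u`, `s₁ = inf {s > 0 | ‖γ s - x‖ ≥ r}` and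
`s₂ = inf {s > 0 | ‖γ s - x‖ ≥ 4r}`. Then both sets are nonempty (so `s₁`, `s₂` are
finite), `s₁ ≤ 2r`, `s₂ - s₁ ≥ 3r`, and for all `s₁ < s < s₂` one has
`r ≤ ‖γ s - x‖ < 4r`. -/
theorem ergodic_nongeneric_stmt7 {E : Type*} [NormedAddCommGroup E] [NormedSpace ℝ E]
    (x p u : E) (r : ℝ) (hr : 0 < r) (hp : ‖p - x‖ < r) (hu : ‖u‖ = 1)
    (γ : ℝ → E) (hγ : ∀ s : ℝ, γ s = p + s • u)
    (s₁ s₂ : ℝ)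
    (hs₁ : s₁ = sInf {s : ℝ | 0 < s ∧ r ≤ ‖γ s - x‖})
    (hs₂ : s₂ = sInf {s : ℝ | 0 < s ∧ 4 * r ≤ ‖γ s - x‖}) :
    {s : ℝ | 0 < s ∧ r ≤ ‖γ s - x‖}.Nonempty ∧
    {s : ℝ | 0 < s ∧ 4 * r ≤ ‖γ s - x‖}.Nonempty ∧
    s₁ ≤ 2 * r ∧ 3 * r ≤ s₂ - s₁ ∧
    ∀ s : ℝ, s₁ < s → s < s₂ → r ≤ ‖γ s - x‖ ∧ ‖γ s - x‖ < 4 * r := by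
  obtain rfl : γ = fun s => p + s • u := funext hγ
  change s₁ = firstHittingTime (fun s => ‖p + s • u - x‖) r at hs₁
  change s₂ = firstHittingTime (fun s => ‖p + s • u - x‖) (4 * r) at hs₂
  subst hs₁ hs₂
  have hlip := lipschitzWith_norm_add_smul_sub p x hu
  have hconv := (convexOn_norm_add_smul_sub p u x).subset (subset_univ _) (convex_Ici 0)
  have hlow := sub_norm_le_norm_add_smul_sub p x hu
  have h0 : ‖p + (0 : ℝ) • u - x‖ < r := by simpa using hp
  have hne₁ : {s : ℝ | 0 < s ∧ r ≤ ‖p + s • u - x‖}.Nonempty :=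
    ⟨2 * r, by positivity, by linarith [hlow (2 * r)]⟩
  have hne₄ : {s : ℝ | 0 < s ∧ 4 * r ≤ ‖p + s • u - x‖}.Nonempty :=
    ⟨5 * r, by positivity, by linarith [hlow (5 * r)]⟩
  refine ⟨hne₁, hne₄, firstHittingTime_le (by positivity) (by linarith [hlow (2 * r)]), ?_,
    fun s hs₁ hs₂ => ⟨le_apply_of_firstHittingTime_lt hconv hlip.continuous h0 hne₁ hs₁, ?_⟩⟩
  · linarith [firstHittingTime_add_sub_le hlip h0.le (by linarith) hne₄]
  · exact apply_lt_of_lt_firstHittingTime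
      ((firstHittingTime_nonneg _ _).trans_lt hs₁) hs₂
end
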